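/- In a delegation game with a deterministic type profile (every agent has a fixed type in {0,1}, so all proximities are 0 or 1), a pure strategy Nash equilibrium always exists. -/

import Mathlib

/-!
Following a guru of the other type, or delegating into a cycle, is worth at most
`1/2 ≤ q i - e i`, so only delegation chains inside one type matter. On the same-type
delegation graph a stable profile is built component by component: take a terminal strongly
connected component `S` of the agents not yet assigned. Outside `S`, its members can only
reach agents whose gurus are already fixed, so their options are known; route all of `S`
along a shortest-path tree to the member `w` holding the best option (voting herself, or
delegating to an assigned neighbour), and let `w` take it. Every member of `S` then gets
at least that value, which dominates all her own options.
-/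

open Classical

/-- Inherited accuracy of agent `i` under delegation profile `d` in a delegation game with
deterministic types `τ`: the guru's accuracy if the guru has the same type, one minus the
guru's accuracy if the types differ, and `1/2` if `i`'s delegation ends in a cycle. -/
noncomputable def detAcc {n : ℕ} (τ : Fin n → Fin 2) (q : Fin n → ℝ)
    (d : Fin n → Fin n) (i : Fin n) : ℝ :=
  if h : ∃ k, d (d^[k] i) = d^[k] i then
    if τ i = τ (d^[Nat.find h] i) then q (d^[Nat.find h] i) else 1 - q (d^[Nat.find h] i)
  else 1/2

/-- Utility of agent `i`: accuracy minus effort if voting directly, inherited accuracy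
otherwise. -/
noncomputable def detUtil {n : ℕ} (τ : Fin n → Fin 2) (q e : Fin n → ℝ)
    (d : Fin n → Fin n) (i : Fin n) : ℝ :=
  if d i = i then q i - e i else detAcc τ q d i

open Function Set Relation

section Iterate

variable {α : Type*}

theorem Function.IsFixedPt.iterate_eq_of_le {f : α → α} {x : α} {k l : ℕ}
    (hk : IsFixedPt f (f^[k] x)) (hkl : k ≤ l) : f^[l] x = f^[k] x := by
  rw [← Nat.sub_add_cancel hkl, iterate_add_apply]
  exact hk.iterate _

theorem Function.IsFixedPt.iterate_eq {f : α → α} {x : α} {k l : ℕ}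
    (hk : IsFixedPt f (f^[k] x)) (hl : IsFixedPt f (f^[l] x)) : f^[k] x = f^[l] x := by
  rcases le_total k l with hkl | hlk
  · exact (hk.iterate_eq_of_le hkl).symm
  · exact hl.iterate_eq_of_le hlk

theorem Function.IsPeriodicPt.isFixedPt_of_isFixedPt_iterate {f : α → α} {x : α} {n k : ℕ}
    (hx : IsPeriodicPt f (n + 1) x) (hk : IsFixedPt f (f^[k] x)) : IsFixedPt f x := by
  have hkx : f^[(n + 1) * k] x = x := hx.mul_const k
  rw [← hkx, hk.iterate_eq_of_le (Nat.le_mul_of_pos_left k n.succ_pos)]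
  exact hk

theorem Set.EqOn.iterate {f g : α → α} {s : Set α} (h : EqOn g f s) (hf : MapsTo f s s)
    (n : ℕ) : EqOn g^[n] f^[n] s := by
  induction n with
  | zero => exact fun _ _ => rfl
  | succ n ih =>
    intro x hx
    rw [iterate_succ_apply', iterate_succ_apply', ih hx, h (hf.iterate n hx)]

theorem iterate_update_self_succ [DecidableEq α] {d : α → α} {i j : α} {m : ℕ}
    (hm : ∀ l < m, d^[l] j ≠ i) : (update d i j)^[m + 1] i = d^[m] j := by
  induction m with
  | zero => simp
  | succ m ih =>
    rw [iterate_succ_apply', ih fun l hl => hm l (by omega),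
      update_of_ne (hm m (by omega)), ← iterate_succ_apply' d]

end Iterate

section DetAcc

variable {n : ℕ} (τ : Fin n → Fin 2) (q : Fin n → ℝ) {d : Fin n → Fin n} {i : Fin n}

theorem detAcc_of_iterate_eq {m : ℕ} {x : Fin n}
    (hm : d^[m] i = x) (hx : d x = x) :
    detAcc τ q d i = if τ i = τ x then q x else 1 - q x := by
  have hex : ∃ k, d (d^[k] i) = d^[k] i := ⟨m, hm ▸ hx⟩
  have hfind : d^[Nat.find hex] i = x :=
    hm ▸ IsFixedPt.iterate_eq (Nat.find_spec hex) (hm ▸ hx : IsFixedPt d (d^[m] i))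
  simp only [detAcc, dif_pos hex, hfind]

theorem detAcc_update_of_iterate_eq_self {j : Fin n} (hji : j ≠ i) (hcyc : ∃ m, d^[m] j = i) :
    detAcc τ q (update d i j) i = 1 / 2 := by
  have hper : IsPeriodicPt (update d i j) (Nat.find hcyc + 1) i := by
    rw [IsPeriodicPt, IsFixedPt, iterate_update_self_succ fun l hl => Nat.find_min hcyc hl]
    exact Nat.find_spec hcyc
  have hno : ¬∃ k, update d i j ((update d i j)^[k] i) = (update d i j)^[k] i := fun ⟨k, hk⟩ =>
    hji (by simpa using (hper.isFixedPt_of_isFixedPt_iterate hk).eq)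
  simp only [detAcc, dif_neg hno]

theorem detAcc_update_of_forall_iterate_ne {j x : Fin n} {m : ℕ} (hnc : ∀ l, d^[l] j ≠ i)
    (hm : d^[m] j = x) (hx : d x = x) :
    detAcc τ q (update d i j) i = if τ i = τ x then q x else 1 - q x := by
  refine detAcc_of_iterate_eq τ q ((iterate_update_self_succ fun l _ => hnc l).trans hm) ?_
  rw [update_of_ne (hm ▸ hnc m), hx]

end DetAcc

section Graph

variable {α : Type*}

def Relation.ReachWithin (r : α → α → Prop) : ℕ → α → α → Prop
  | 0, x, y => x = y
  | k + 1, x, y => x = y ∨ ∃ z, r x z ∧ ReachWithin r k z y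

theorem Relation.reflTransGen_iff_exists_reachWithin {r : α → α → Prop} {x y : α} :
    ReflTransGen r x y ↔ ∃ k, ReachWithin r k x y := by
  constructor
  · intro h
    induction h using ReflTransGen.head_induction_on with
    | refl => exact ⟨0, rfl⟩
    | head hxz _ ih =>
      obtain ⟨k, hk⟩ := ih
      exact ⟨k + 1, Or.inr ⟨_, hxz, hk⟩⟩
  · rintro ⟨k, hk⟩
    induction k generalizing x with
    | zero => exact hk ▸ ReflTransGen.refl
    | succ k ih =>
      rcases hk with rfl | ⟨z, hxz, hz⟩
      · exact ReflTransGen.refl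
      · exact ReflTransGen.head hxz (ih hz)

theorem Set.Finite.exists_terminal_component {U : Set α} (hU : U.Finite) (hne : U.Nonempty)
    (r : α → α → Prop) : ∃ S ⊆ U, S.Nonempty ∧ (∀ y ∈ S, ∀ z ∈ U, r y z → z ∈ S) ∧
      ∀ y ∈ S, ∀ z ∈ S, ReflTransGen (fun u v => r u v ∧ v ∈ U) y z := by
  set reach : α → Set α := fun x => {y | ReflTransGen (fun u v => r u v ∧ v ∈ U) x y}
  have hreach : ∀ x ∈ U, reach x ⊆ U := fun x hx y hy => by
    rcases hy.cases_tail with rfl | ⟨_, _, _, hyU⟩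
    exacts [hx, hyU]
  obtain ⟨x, hxU, hmin⟩ := U.exists_min_image (fun x => (reach x).ncard) hU hne
  have hback : ∀ y ∈ reach x, x ∈ reach y := fun y hy => by
    have heq : reach y = reach x := Set.eq_of_subset_of_ncard_le (fun z hz => hy.trans hz)
      (hmin y (hreach x hxU hy)) (hU.subset (hreach x hxU))
    exact heq ▸ ReflTransGen.refl
  exact ⟨reach x, hreach x hxU, ⟨x, ReflTransGen.refl⟩, fun y hy z hzU hyz => hy.tail ⟨hyz, hzU⟩,
    fun y hy z hz => (hback y hy).trans hz⟩

theorem exists_route (r : α → α → Prop) (w : α) (d₀ : α → α) :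
    ∃ f : α → α, (∀ y, (y = w ∨ ¬ReflTransGen r y w) → f y = d₀ y) ∧
      ∀ y, ReflTransGen r y w → (y ≠ w → r y (f y)) ∧ ∃ m, f^[m] y = w := by
  set ρ : α → ℕ := fun y => sInf {k | ReachWithin r k y w}
  have hstep : ∀ y, y ≠ w → ReflTransGen r y w →
      ∃ z, r y z ∧ ReflTransGen r z w ∧ ρ z < ρ y := by
    intro y hyw hy
    have hρ : ReachWithin r (ρ y) y w :=
      Nat.sInf_mem (reflTransGen_iff_exists_reachWithin.1 hy)
    match ρ y, hρ with
    | 0, hρ => exact absurd hρ hyw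
    | k + 1, Or.inl h => exact absurd h hyw
    | k + 1, Or.inr ⟨z, hyz, hz⟩ =>
      exact ⟨z, hyz, reflTransGen_iff_exists_reachWithin.2 ⟨k, hz⟩,
        Nat.lt_succ_of_le (Nat.sInf_le hz)⟩
  choose! next hnext using hstep
  set f : α → α := fun y => if y ≠ w ∧ ReflTransGen r y w then next y else d₀ y
  have hf : ∀ y, y ≠ w → ReflTransGen r y w → f y = next y := fun y hyw hy => if_pos ⟨hyw, hy⟩
  refine ⟨f, fun y hy => if_neg (by tauto),
    fun y hy => ⟨fun hyw => hf y hyw hy ▸ (hnext y hyw hy).1, ?_⟩⟩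
  induction hk : ρ y using Nat.strong_induction_on generalizing y with
  | _ k ih =>
    by_cases hyw : y = w
    · exact ⟨0, hyw⟩
    obtain ⟨hyz, hz, hlt⟩ := hnext y hyw hy
    obtain ⟨m, hm⟩ := ih _ (hk ▸ hlt) (next y) hz rfl
    exact ⟨m + 1, by rw [iterate_succ_apply, hf y hyw hy, hm]⟩

end Graph

namespace Delegation

variable {α β : Type*} [DecidableEq α] [LinearOrder β] (E : α → α → Prop) (a b : α → β)

/-- `a i` is what `i` gets by voting, `b x` what a follower of the guru `x` gets. -/
def payoff (d g : α → α) (i : α) : β := if d i = i then a i else b (g i)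

/-- Deviations to a neighbour whose chain leads back to `i` are exempt: they create a cycle,
which the delegation game values below `a i`. -/
structure IsStableAt (d g : α → α) (i : α) : Prop where
  legal : d i = i ∨ E i (d i)
  reaches_guru : ∃ m, d^[m] i = g i
  guru_fixed : d (g i) = g i
  le_payoff : a i ≤ payoff a b d g i
  no_improvement : ∀ j, E i j → (∃ m, d^[m] j = i) ∨ b (g j) ≤ payoff a b d g i

structure IsStableOn (A : Set α) (d g : α → α) : Prop where
  closed : ∀ i ∈ A, ∀ j, E i j → j ∈ A
  stableAt : ∀ i ∈ A, IsStableAt E a b d g i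

variable {E a b} {A : Set α} {d g : α → α}

theorem IsStableOn.mapsTo (h : IsStableOn E a b A d g) : MapsTo d A A := fun i hi =>
  (h.stableAt i hi).legal.elim (fun hii => by rwa [hii]) (h.closed i hi _)

theorem IsStableOn.guru_mem (h : IsStableOn E a b A d g) {i : α} (hi : i ∈ A) : g i ∈ A := by
  obtain ⟨m, hm⟩ := (h.stableAt i hi).reaches_guru
  exact hm ▸ h.mapsTo.iterate m hi

theorem IsStableOn.isStableAt_of_eqOn {d' g' : α → α} (h : IsStableOn E a b A d g)
    (hd : EqOn d' d A) (hg : EqOn g' g A) {i : α} (hi : i ∈ A) : IsStableAt E a b d' g' i := by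
  have hiter := hd.iterate h.mapsTo
  have hpay : payoff a b d' g' i = payoff a b d g i := by
    simp only [payoff, hd hi, hg hi]
  obtain ⟨hlegal, ⟨m, hm⟩, hfix, hle, hno⟩ := h.stableAt i hi
  refine ⟨hd hi ▸ hlegal, ⟨m, by rw [hiter m hi, hm, hg hi]⟩, ?_, hpay ▸ hle, fun j hij => ?_⟩
  · rw [hg hi, hd (h.guru_mem hi), hfix]
  · have hj := h.closed i hi j hij
    rw [hpay, hg hj]
    simpa only [hiter _ hj] using hno j hij

theorem isStableAt_of_route {S : Set α} {w : α} (hS : ∀ y ∈ S, ∀ z, E y z → z ∈ A ∨ z ∈ S)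
    (hlegal : ∀ y ∈ S, d y = y ∨ E y (d y)) (hreach : ∀ y ∈ S, ∃ m, d^[m] y = w)
    (hg : ∀ y ∈ S, g y = g w) (hw : ∃ m, d^[m] w = g w) (hfix : d (g w) = g w)
    (hown : ∀ y ∈ S, a y ≤ payoff a b d g w)
    (hesc : ∀ y ∈ S, ∀ k ∈ A, E y k → b (g k) ≤ payoff a b d g w)
    (hbw : payoff a b d g w ≤ b (g w)) {y : α} (hy : y ∈ S) : IsStableAt E a b d g y := by
  obtain ⟨m₁, hm₁⟩ := hreach y hy
  obtain ⟨m₂, hm₂⟩ := hw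
  have hpay : y ≠ w → payoff a b d g y = b (g w) := fun hyw => by
    have hdy : d y ≠ y := fun hyy => hyw (by rw [← hm₁, iterate_fixed hyy])
    rw [payoff, if_neg hdy, hg y hy]
  have hle : payoff a b d g w ≤ payoff a b d g y := by
    by_cases hyw : y = w
    · rw [hyw]
    · exact hpay hyw ▸ hbw
  refine ⟨hlegal y hy, ⟨m₂ + m₁, by rw [iterate_add_apply, hm₁, hm₂, hg y hy]⟩, hg y hy ▸ hfix,
    (hown y hy).trans hle, fun j hyj => ?_⟩
  rcases hS y hy j hyj with hjA | hjS
  · exact Or.inr ((hesc y hy j hjA hyj).trans hle)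
  by_cases hyw : y = w
  · exact Or.inl (hyw ▸ hreach j hjS)
  · exact Or.inr (by rw [hpay hyw, hg j hjS])

theorem exists_best_option [Finite α] {S : Set α} (hne : S.Nonempty) (hSA : S ⊆ Aᶜ)
    (g : α → α) : ∃ w ∈ S, ∃ t, (t = w ∨ t ∈ A ∧ E w t) ∧ ∀ y ∈ S,
      a y ≤ (if t = w then a w else b (g t)) ∧
      ∀ k ∈ A, E y k → b (g k) ≤ (if t = w then a w else b (g t)) := by
  set val : α × α → β := fun p => if p.2 = p.1 then a p.1 else b (g p.2)
  obtain ⟨⟨w, t⟩, ⟨hwS, ht⟩, hbest⟩ := Set.exists_max_image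
    {p : α × α | p.1 ∈ S ∧ (p.2 = p.1 ∨ p.2 ∈ A ∧ E p.1 p.2)} val (toFinite _)
    (let ⟨x, hx⟩ := hne; ⟨(x, x), hx, Or.inl rfl⟩)
  refine ⟨w, hwS, t, ht, fun y hy => ⟨?_, fun k hk hyk => ?_⟩⟩
  · simpa [val] using hbest (y, y) ⟨hy, Or.inl rfl⟩
  · have hky : k ≠ y := fun hky => hSA hy (hky ▸ hk)
    simpa [val, hky] using hbest (y, k) ⟨hy, Or.inr ⟨hk, hyk⟩⟩

theorem IsStableOn.guru_payoff_of_option (hab : ∀ i, a i ≤ b i) (h : IsStableOn E a b A d g)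
    {f g' : α → α} (hfA : EqOn f d A) (hgA : EqOn g' g A) {w t : α} (ht : t ≠ w → t ∈ A)
    (hfw : f w = t) (hgw : g' w = if t = w then w else g t) :
    (∃ m, f^[m] w = g' w) ∧ f (g' w) = g' w ∧
      payoff a b f g' w = (if t = w then a w else b (g t)) ∧
      (if t = w then a w else b (g t)) ≤ b (g' w) := by
  by_cases htw : t = w
  · have hG : g' w = w := hgw.trans (if_pos htw)
    have hfw' : f w = w := hfw.trans htw
    refine ⟨⟨0, hG.symm⟩, by rw [hG, hfw'], ?_, ?_⟩
    · simp only [payoff, hfw', if_pos htw, if_true]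
    · simpa only [if_pos htw, hG] using hab w
  · have htA : t ∈ A := ht htw
    have hG : g' w = g' t := (hgw.trans (if_neg htw)).trans (hgA htA).symm
    have ht' := h.isStableAt_of_eqOn hfA hgA htA
    obtain ⟨m, hm⟩ := ht'.reaches_guru
    refine ⟨⟨m + 1, by rw [iterate_succ_apply, hfw, hm, hG]⟩, hG ▸ ht'.guru_fixed, ?_, ?_⟩
    · simp only [payoff, hfw, if_neg htw, hG, hgA htA]
    · simp only [if_neg htw, hG, hgA htA, le_refl]

theorem IsStableOn.exists_union [Finite α] (hab : ∀ i, a i ≤ b i) (h : IsStableOn E a b A d g)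
    {S : Set α} (hSA : S ⊆ Aᶜ) (hne : S.Nonempty) (hS : ∀ y ∈ S, ∀ z ∈ Aᶜ, E y z → z ∈ S)
    (hconn : ∀ y ∈ S, ∀ z ∈ S, ReflTransGen (fun u v => E u v ∧ v ∈ Aᶜ) y z) :
    ∃ d' g', IsStableOn E a b (A ∪ S) d' g' := by
  obtain ⟨w, hwS, t, ht, hbest⟩ := exists_best_option (E := E) (b := b) (a := a) hne hSA g
  obtain ⟨f, hf_out, hf_route⟩ := exists_route (fun u v => E u v ∧ v ∈ Aᶜ) w (update d w t)
  set g' : α → α := fun y => if y ∈ S then (if t = w then w else g t) else g y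
  have hfA : EqOn f d A := fun y hy => by
    have hyw : y ≠ w := fun hyw => hSA hwS (hyw ▸ hy)
    refine (hf_out y (Or.inr fun hyw' => ?_)).trans (update_of_ne hyw _ _)
    rcases hyw'.cases_head with rfl | ⟨z, ⟨hyz, hzA⟩, _⟩
    exacts [hyw rfl, hzA (h.closed y hy z hyz)]
  have hgA : EqOn g' g A := fun y hy => if_neg fun hyS => hSA hyS hy
  have hfw : f w = t := (hf_out w (Or.inl rfl)).trans (update_self _ _ _)
  obtain ⟨hwG, hfixG, hpay, hbw⟩ := h.guru_payoff_of_option hab hfA hgA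
    (fun htw => (ht.resolve_left htw).1) hfw ((if_pos hwS).trans rfl)
  have hS' : ∀ y ∈ S, ∀ z, E y z → z ∈ A ∨ z ∈ S := fun y hy z hyz =>
    or_iff_not_imp_left.2 fun hzA => hS y hy z hzA hyz
  refine ⟨f, g', fun i hi j hij => ?_, fun i hi => ?_⟩
  · rcases hi with hi | hi
    exacts [Or.inl (h.closed i hi j hij), hS' i hi j hij]
  rcases hi with hi | hi
  · exact h.isStableAt_of_eqOn hfA hgA hi
  refine isStableAt_of_route hS' (fun y hy => ?_) (fun y hy => (hf_route y (hconn y hy w hwS)).2)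
    (fun y hy => (if_pos hy).trans (if_pos hwS).symm) hwG hfixG
    (fun y hy => hpay ▸ (hbest y hy).1) (fun y hy k hk hyk => ?_) (hpay ▸ hbw) hi
  · by_cases hyw : y = w
    · exact hyw ▸ hfw ▸ ht.imp_right And.right
    · exact Or.inr ((hf_route y (hconn y hy w hwS)).1 hyw).1
  · show b (g' k) ≤ _
    rw [hpay, hgA hk]
    exact (hbest y hy).2 k hk hyk

theorem IsStableOn.exists_gt [Finite α] (hab : ∀ i, a i ≤ b i) (h : IsStableOn E a b A d g)
    (hA : A ≠ univ) : ∃ A' > A, ∃ d' g', IsStableOn E a b A' d' g' := by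
  obtain ⟨S, hSA, ⟨x, hxS⟩, hS, hconn⟩ :=
    Aᶜ.toFinite.exists_terminal_component (nonempty_compl.2 hA) E
  exact ⟨A ∪ S, (ssubset_iff_of_subset subset_union_left).2 ⟨x, Or.inr hxS, hSA hxS⟩,
    h.exists_union hab hSA ⟨x, hxS⟩ hS hconn⟩

theorem exists_isStableOn_univ [Finite α] (hab : ∀ i, a i ≤ b i) :
    ∃ d g, IsStableOn E a b univ d g :=
  WellFoundedGT.induction_top (P := fun A => ∃ d g, IsStableOn E a b A d g)
    ⟨∅, id, id, by simp, by simp⟩ fun _ hA ⟨_, _, h⟩ => h.exists_gt hab hA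

end Delegation

section Deterministic

variable {n : ℕ} {R : Fin n → Fin n → Prop} {τ : Fin n → Fin 2} {q e : Fin n → ℝ}
  {d g : Fin n → Fin n}

theorem type_guru_eq {a b : Fin n → ℝ}
    (hd : ∀ i, Delegation.IsStableAt (fun i j => R i j ∧ τ j = τ i) a b d g i) (i : Fin n) :
    τ (g i) = τ i := by
  have hτd : τ ∘ d = τ := funext fun i => (hd i).legal.elim (congrArg τ) And.right
  obtain ⟨m, hm⟩ := (hd i).reaches_guru
  rw [← hm]
  exact congrFun (iterate_invariant hτd m) i

theorem detUtil_eq_payoff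
    (hd : ∀ i, Delegation.IsStableAt (fun i j => R i j ∧ τ j = τ i) (fun i => q i - e i) q d g i)
    (i : Fin n) : detUtil τ q e d i = Delegation.payoff (fun i => q i - e i) q d g i := by
  by_cases hdi : d i = i
  · simp only [detUtil, Delegation.payoff, if_pos hdi]
  · obtain ⟨m, hm⟩ := (hd i).reaches_guru
    rw [detUtil, Delegation.payoff, if_neg hdi, if_neg hdi,
      detAcc_of_iterate_eq τ q hm (hd i).guru_fixed, if_pos (type_guru_eq hd i).symm]

end Deterministic

theorem det_delegation_game_NE_exists (n : ℕ) (R : Fin n → Fin n → Prop)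
    (τ : Fin n → Fin 2) (q e : Fin n → ℝ)
    (he : ∀ i, 0 ≤ e i) (hqe : ∀ i, 1/2 ≤ q i - e i) :
    ∃ d : Fin n → Fin n,
      (∀ i, d i = i ∨ R i (d i)) ∧
      (∀ i j, (j = i ∨ R i j) →
        detUtil τ q e (Function.update d i j) i ≤ detUtil τ q e d i) := by
  obtain ⟨d, g, -, hstable⟩ := Delegation.exists_isStableOn_univ
    (E := fun i j => R i j ∧ τ j = τ i) (a := fun i => q i - e i) (b := q)
    fun i => by linarith [he i]
  have hd : ∀ i, Delegation.IsStableAt _ _ _ d g i := fun i => hstable i trivial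
  refine ⟨d, fun i => (hd i).legal.imp_right And.left, fun i j hij => ?_⟩
  rw [detUtil_eq_payoff hd]
  have hhalf := (hqe i).trans (hd i).le_payoff
  rcases eq_or_ne j i with rfl | hji
  · simpa [detUtil] using (hd j).le_payoff
  rw [detUtil, update_self, if_neg hji]
  by_cases hcyc : ∃ m, d^[m] j = i
  · rw [detAcc_update_of_iterate_eq_self τ q hji hcyc]
    exact hhalf
  obtain ⟨m, hm⟩ := (hd j).reaches_guru
  rw [detAcc_update_of_forall_iterate_ne τ q (not_exists.1 hcyc) hm (hd j).guru_fixed]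
  split_ifs with hτij
  · exact ((hd i).no_improvement j ⟨hij.resolve_left hji,
      (type_guru_eq hd j).symm.trans hτij.symm⟩).resolve_left hcyc
  · linarith [hqe (g j), he (g j)]
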